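/- Under the hypotheses of the main theorem (subcritical, positive regular, non-singular, continuous generating function), if λ ∈ [0,∞)^d and there exists m ∈ ℕ with g^{(m)}(λ) < λ componentwise (at least one strict), then lim_{n→∞} g^{(n)}(λ) = 0. Symmetrically, if g^{(m)}(λ) > λ for some m, then lim_{n→∞} |g^{(n)}(λ)| = ∞. -/

import Mathlib

open MeasureTheory ProbabilityTheory ENNReal Filter Set

/-- Extended exponential `[0,∞] → [1,∞]`. -/
noncomputable def eexp (x : ℝ≥0∞) : ℝ≥0∞ :=
  if x = ⊤ then ⊤ else ENNReal.ofReal (Real.exp x.toReal)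

/-- Extended logarithm, suitable for values in `[1,∞]`. -/
noncomputable def elog (y : ℝ≥0∞) : ℝ≥0∞ :=
  if y = ⊤ then ⊤ else ENNReal.ofReal (Real.log y.toReal)

/-- The generating function of the `n`-th generation of a `d`-type branching process:
`F P X n q k = 𝔼ₖ[∏ⱼ qⱼ ^ Xⱼ(n)]`, where `P k` is the law of the process started from a
single individual of type `k`. Values are in `[0,∞]`, with the conventions `∞ ^ 0 = 1`
and `∞ ^ x = ∞` for `x > 0` built into `ℝ≥0∞`. -/
noncomputable def genFun {d : ℕ} {Ω : Type*} [MeasurableSpace Ω]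
    (P : Fin d → Measure Ω) (X : ℕ → Ω → Fin d → ℕ) (n : ℕ)
    (q : Fin d → ℝ≥0∞) : Fin d → ℝ≥0∞ :=
  fun k => ∫⁻ ω, ∏ j, (q j) ^ (X n ω j) ∂ (P k)

/-- The log-Laplace transform of the `n`-th generation:
`logGenFun P X n λ k = log 𝔼ₖ[exp (∑ⱼ λⱼ Xⱼ(n))]`, i.e. `g⁽ⁿ⁾(λ) = log f⁽ⁿ⁾(e^λ)`
componentwise, viewed as a map `[0,∞]^d → [0,∞]^d`. -/
noncomputable def logGenFun {d : ℕ} {Ω : Type*} [MeasurableSpace Ω]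
    (P : Fin d → Measure Ω) (X : ℕ → Ω → Fin d → ℕ) (n : ℕ)
    (l : Fin d → ℝ≥0∞) : Fin d → ℝ≥0∞ :=
  fun k => elog (genFun P X n (fun j => eexp (l j)) k)

/-- The event that the branching process eventually becomes extinct. -/
def ExtinctionEvent {d : ℕ} {Ω : Type*} (X : ℕ → Ω → Fin d → ℕ) : Set Ω :=
  {ω | ∃ N, ∀ n ≥ N, X n ω = 0}

/-- Positive regularity: for some `N`, started from any type `k`, there is a positive
chance of having an individual of type `j` in generation `N`, for every `j`. -/
def PositiveRegular {d : ℕ} {Ω : Type*} [MeasurableSpace Ω]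
    (P : Fin d → Measure Ω) (X : ℕ → Ω → Fin d → ℕ) : Prop :=
  ∃ N, ∀ k j, 0 < P k {ω | 1 ≤ X N ω j}

/-- Non-singularity: some type has a positive chance of at least two total offspring. -/
def NonSingular {d : ℕ} {Ω : Type*} [MeasurableSpace Ω]
    (P : Fin d → Measure Ω) (X : ℕ → Ω → Fin d → ℕ) : Prop :=
  ∃ k, 0 < P k {ω | 2 ≤ ∑ j, X 1 ω j}

/-- The mean matrix `M k j = 𝔼ₖ[Xⱼ(1)]`. -/
noncomputable def meanMatrix {d : ℕ} {Ω : Type*} [MeasurableSpace Ω]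
    (P : Fin d → Measure Ω) (X : ℕ → Ω → Fin d → ℕ) : Matrix (Fin d) (Fin d) ℝ :=
  fun k j => (∫⁻ ω, (X 1 ω j : ℝ≥0∞) ∂ (P k)).toReal

/-- Subcriticality: the mean matrix has finite entries and all of its (complex)
eigenvalues have modulus `< 1`; for a nonnegative matrix this says exactly that the
largest (Perron–Frobenius) eigenvalue is `< 1`. -/
def Subcritical {d : ℕ} {Ω : Type*} [MeasurableSpace Ω]
    (P : Fin d → Measure Ω) (X : ℕ → Ω → Fin d → ℕ) : Prop :=
  (∀ k j, ∫⁻ ω, (X 1 ω j : ℝ≥0∞) ∂ (P k) ≠ ⊤) ∧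
    ∀ μ ∈ spectrum ℂ ((meanMatrix P X).map (Complex.ofReal)), ‖μ‖ < 1

/-- Continuity of each component of the generating function on `(0,∞]^d`
(Hypothesis III of the main theorem). -/
def GenFunContinuous {d : ℕ} {Ω : Type*} [MeasurableSpace Ω]
    (P : Fin d → Measure Ω) (X : ℕ → Ω → Fin d → ℕ) : Prop :=
  ∀ k, ContinuousOn (fun q => genFun P X 1 q k) {q : Fin d → ℝ≥0∞ | ∀ j, 0 < q j}

/-!
Write `g = logGenFun P X 1`. Jensen's inequality for `t ↦ t ^ θ` makes `g` log-convex, so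
`g (θ • x) ≤ θ • g x` for `θ ≤ 1`; positive regularity makes `g^[N]` strictly monotone and
spreads an infinite coordinate to all coordinates. If `g^[m] λ < λ`, the orbit of `λ` under
`g^[m]` decreases to a fixed point `Λ`, and comparing `g^[N] Λ` with `θ • g^[N] λ` for the
largest coordinate ratio `θ` shows `g^[N] Λ = 0`, so each residue class mod `m` of the orbit of
`λ` tends to `0`. If `λ < g^[m] λ`, the same comparison shows that the increasing limit has an
infinite coordinate. Infinite coordinates never disappear again: a finite `g^[u] ⊤` would force
`g^[u] = 0`.
-/

open Function Topology

lemma eexp_eq_exp (x : ℝ≥0∞) : eexp x = EReal.exp x := by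
  rcases eq_or_ne x ⊤ with rfl | hx
  · rfl
  · rw [eexp, if_neg hx, ← EReal.coe_ennreal_toReal hx, EReal.exp_coe]

lemma elog_eq_toENNReal_log (y : ℝ≥0∞) : elog y = (ENNReal.log y).toENNReal := by
  rcases eq_or_ne y ⊤ with rfl | hy
  · rfl
  rcases eq_or_ne y 0 with rfl | hy0
  · simp [elog]
  · rw [elog, if_neg hy, ENNReal.log_pos_real hy0 hy, EReal.real_coe_toENNReal]

lemma one_le_eexp (x : ℝ≥0∞) : 1 ≤ eexp x := by
  simp [eexp_eq_exp, EReal.coe_ennreal_nonneg]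

lemma eexp_pos (x : ℝ≥0∞) : 0 < eexp x :=
  zero_lt_one.trans_le (one_le_eexp x)

lemma strictMono_eexp : StrictMono eexp := fun x y h => by
  simpa [eexp_eq_exp] using EReal.coe_ennreal_lt_coe_ennreal_iff.2 h

lemma monotone_eexp : Monotone eexp :=
  strictMono_eexp.monotone

lemma eexp_eq_top_iff {x : ℝ≥0∞} : eexp x = ⊤ ↔ x = ⊤ := by
  simp [eexp_eq_exp]

lemma continuous_eexp : Continuous eexp := by
  rw [funext eexp_eq_exp]
  exact ENNReal.continuous_exp.comp continuous_coe_ennreal_ereal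

lemma eexp_mul {θ : ℝ≥0∞} (hθ : θ ≠ ⊤) (x : ℝ≥0∞) : eexp (θ * x) = eexp x ^ θ.toReal := by
  rw [eexp_eq_exp, eexp_eq_exp, EReal.coe_ennreal_mul, mul_comm, ← EReal.coe_ennreal_toReal hθ,
    EReal.exp_mul]

lemma monotone_elog : Monotone elog := fun x y h => by
  simpa only [elog_eq_toENNReal_log] using EReal.toENNReal_le_toENNReal (ENNReal.log_monotone h)

lemma elog_lt_elog {x y : ℝ≥0∞} (hx : 1 ≤ x) (h : x < y) : elog x < elog y := by
  simpa only [elog_eq_toENNReal_log] using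
    EReal.toENNReal_lt_toENNReal (ENNReal.zero_le_log_iff.2 hx) (ENNReal.log_strictMono h)

lemma continuous_elog : Continuous elog := by
  rw [funext elog_eq_toENNReal_log]
  exact EReal.continuous_toENNReal.comp ENNReal.continuous_log

lemma elog_eexp (x : ℝ≥0∞) : elog (eexp x) = x := by
  rw [elog_eq_toENNReal_log, eexp_eq_exp, EReal.log_exp, EReal.toENNReal_coe]

lemma eexp_elog {y : ℝ≥0∞} (hy : 1 ≤ y) : eexp (elog y) = y := by
  rw [elog_eq_toENNReal_log, eexp_eq_exp, EReal.coe_toENNReal (ENNReal.zero_le_log_iff.2 hy),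
    ENNReal.exp_log]

lemma elog_eq_top_iff {y : ℝ≥0∞} : elog y = ⊤ ↔ y = ⊤ := by
  simp [elog_eq_toENNReal_log, EReal.toENNReal_eq_top_iff]

lemma elog_rpow (y : ℝ≥0∞) {c : ℝ} (hc : 0 ≤ c) :
    elog (y ^ c) = ENNReal.ofReal c * elog y := by
  rw [elog_eq_toENNReal_log, elog_eq_toENNReal_log, ENNReal.log_rpow,
    EReal.toENNReal_mul (EReal.coe_nonneg.2 hc), EReal.real_coe_toENNReal]

lemma MeasureTheory.lintegral_rpow_le_rpow_lintegral {α : Type*} [MeasurableSpace α] {μ : Measure α}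
    [IsProbabilityMeasure μ] {f : α → ℝ≥0∞} (hf : AEMeasurable f μ) {c : ℝ} (hc0 : 0 ≤ c)
    (hc1 : c ≤ 1) : ∫⁻ a, f a ^ c ∂μ ≤ (∫⁻ a, f a ∂μ) ^ c := by
  rcases hc0.eq_or_lt with rfl | hc0
  · simp
  have h := eLpNorm'_le_eLpNorm'_of_exponent_le hc0 hc1 μ hf.aestronglyMeasurable
  simp only [eLpNorm', enorm_eq_self, ENNReal.rpow_one, div_one] at h
  calc ∫⁻ a, f a ^ c ∂μ = ((∫⁻ a, f a ^ c ∂μ) ^ (1 / c)) ^ c := by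
        rw [← ENNReal.rpow_mul, one_div_mul_cancel hc0.ne', ENNReal.rpow_one]
    _ ≤ (∫⁻ a, f a ∂μ) ^ c := ENNReal.rpow_le_rpow h hc0.le

lemma ENNReal.prod_pow_lt_prod_pow {ι : Type*} [Fintype ι] {a b : ι → ℝ≥0∞} {e : ι → ℕ}
    (ha : ∀ i, a i ≠ 0) (hab : a ≤ b) {j : ι} (hj : a j < b j) (hej : e j ≠ 0)
    (hfin : ∏ i, a i ^ e i ≠ ⊤) : ∏ i, a i ^ e i < ∏ i, b i ^ e i := by
  classical
  rw [← Finset.mul_prod_erase _ _ (Finset.mem_univ j)] at hfin ⊢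
  rw [← Finset.mul_prod_erase _ _ (Finset.mem_univ j)]
  have hrest_ne_zero : ∏ i ∈ Finset.univ.erase j, a i ^ e i ≠ 0 :=
    Finset.prod_ne_zero_iff.2 fun i _ => pow_ne_zero _ (ha i)
  have hrest_ne_top : ∏ i ∈ Finset.univ.erase j, a i ^ e i ≠ ⊤ := fun h =>
    hfin (by rw [h, ENNReal.mul_top (pow_ne_zero _ (ha j))])
  calc a j ^ e j * ∏ i ∈ Finset.univ.erase j, a i ^ e i
      < b j ^ e j * ∏ i ∈ Finset.univ.erase j, a i ^ e i :=
        ENNReal.mul_lt_mul_left hrest_ne_zero hrest_ne_top (ENNReal.pow_lt_pow_left hej hj)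
    _ ≤ b j ^ e j * ∏ i ∈ Finset.univ.erase j, b i ^ e i := by
        gcongr with i; exact hab i

lemma Filter.tendsto_of_forall_tendsto_mul_add {α : Type*} {F : ℕ → α} {l : Filter α} {m : ℕ}
    (hm : 0 < m) (h : ∀ r < m, Tendsto (fun q => F (q * m + r)) atTop l) :
    Tendsto F atTop l := by
  intro U hU
  rw [mem_map]
  have hall : ∀ᶠ q in atTop, ∀ r : Fin m, F (q * m + r) ∈ U :=
    eventually_all.2 fun r => h r r.2 hU
  filter_upwards [(Nat.tendsto_div_const_atTop hm.ne').eventually hall] with n hn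
  simpa only [mem_preimage, Nat.div_add_mod'] using hn ⟨n % m, Nat.mod_lt n hm⟩

lemma Function.IsPeriodicPt.exists_iterate_eq {α : Type*} {g : α → α} {m : ℕ} {y : α}
    (hy : IsPeriodicPt g m y) (hm : 0 < m) (r N : ℕ) : ∃ u, g^[r] y = g^[u] (g^[N] y) := by
  refine ⟨r + m * N - N, ?_⟩
  rw [← iterate_add_apply, Nat.sub_add_cancel (by nlinarith), iterate_add_apply,
    (hy.mul_const N).eq]

lemma tendsto_comp_iterate_of_tendsto_iterate_iterate {α β : Type*} [TopologicalSpace α]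
    [TopologicalSpace β] {g : α → α} (hg : Continuous g) {m : ℕ} (hm : 0 < m) {x y : α}
    (hxy : Tendsto (fun q => (g^[m])^[q] x) atTop (𝓝 y)) {φ : α → β} (hφ : Continuous φ) {b : β}
    (hb : ∀ r, φ (g^[r] y) = b) : Tendsto (fun n => φ (g^[n] x)) atTop (𝓝 b) := by
  refine tendsto_of_forall_tendsto_mul_add hm fun r _ => ?_
  have h : Tendsto (fun q => φ (g^[r] ((g^[m])^[q] x))) atTop (𝓝 (φ (g^[r] y))) :=
    ((hφ.comp (hg.iterate r)).tendsto y).comp hxy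
  rw [hb r] at h
  refine h.congr fun q => ?_
  rw [← iterate_mul, ← iterate_add_apply, add_comm, mul_comm]

section Dynamics

variable {ι : Type*}

def MapSmulLeSmul (g : (ι → ℝ≥0∞) → ι → ℝ≥0∞) : Prop :=
  ∀ θ : ℝ≥0∞, θ ≤ 1 → ∀ x, g (θ • x) ≤ θ • g x

lemma exists_le_smul_of_le [Fintype ι] [Nonempty ι] {a b : ι → ℝ≥0∞} (hab : a ≤ b)
    (hb0 : ∀ j, b j ≠ 0) (hbt : ∀ j, b j ≠ ⊤) : ∃ θ ≤ 1, ∃ j, a ≤ θ • b ∧ a j = θ * b j := by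
  obtain ⟨j, -, hj⟩ := Finset.exists_max_image Finset.univ (fun j => a j / b j)
    Finset.univ_nonempty
  have hratio : ∀ i, a i = a i / b i * b i := fun i =>
    (ENNReal.div_mul_cancel (hb0 i) (hbt i)).symm
  refine ⟨a j / b j, ENNReal.div_le_of_le_mul (by simpa using hab j), j, fun i => ?_, hratio j⟩
  calc a i = a i / b i * b i := hratio i
    _ ≤ a j / b j * b i := mul_le_mul' (hj i (Finset.mem_univ i)) le_rfl

namespace MapSmulLeSmul

variable {g : (ι → ℝ≥0∞) → ι → ℝ≥0∞}

lemma map_zero (hg : MapSmulLeSmul g) : g 0 = 0 :=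
  le_antisymm (by simpa using hg 0 zero_le_one 0) bot_le

lemma iterate (hg : MapSmulLeSmul g) (hmono : Monotone g) (n : ℕ) : MapSmulLeSmul g^[n] := by
  induction n with
  | zero => exact fun _ _ _ => le_rfl
  | succ n ih =>
    intro θ hθ x
    rw [iterate_succ_apply', iterate_succ_apply']
    exact (hmono (ih θ hθ x)).trans (hg θ hθ _)

/-- `θ • ⊤ = ⊤` for `θ ≠ 0`, so a finite `g ⊤` satisfies `g ⊤ ≤ g ⊤ / 2`. -/
lemma eq_zero_of_map_top_ne_top (hg : MapSmulLeSmul g) (hmono : Monotone g)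
    (htop : ∀ k, g ⊤ k ≠ ⊤) (x : ι → ℝ≥0∞) : g x = 0 := by
  have hgtop : g ⊤ = 0 := by
    funext k
    have h := hg 2⁻¹ (by norm_num) ⊤ k
    rw [show (2⁻¹ : ℝ≥0∞) • (⊤ : ι → ℝ≥0∞) = ⊤ from funext fun _ => ENNReal.mul_top (by norm_num),
      Pi.smul_apply, smul_eq_mul, ← ENNReal.div_eq_inv_mul] at h
    by_contra h0
    exact (ENNReal.half_lt_self h0 (htop k)).not_ge h
  exact le_antisymm (hgtop ▸ hmono le_top) bot_le

lemma iterate_eq_zero_of_le (hg : MapSmulLeSmul g) (hmono : Monotone g) {u : ℕ}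
    (htop : ∀ k, g^[u] ⊤ k ≠ ⊤) {n : ℕ} (hn : u ≤ n) (x : ι → ℝ≥0∞) : g^[n] x = 0 := by
  rw [← Nat.add_sub_cancel' hn, iterate_add_apply]
  exact (hg.iterate hmono u).eq_zero_of_map_top_ne_top (hmono.iterate u) htop _

lemma eq_zero_of_isFixedPt_of_le [Fintype ι] (hg : MapSmulLeSmul g) (hmono : Monotone g)
    {L s : ι → ℝ≥0∞} (hL : IsFixedPt g L) (hLs : L ≤ s) (hs : ∀ j, s j ≠ ⊤)
    (hlt : ∀ j, g s j < s j) : L = 0 := by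
  cases isEmpty_or_nonempty ι
  · exact Subsingleton.elim _ _
  obtain ⟨θ, hθ1, j, hLθ, hj⟩ :=
    exists_le_smul_of_le hLs (fun j => (pos_of_gt (hlt j)).ne') hs
  suffices hθ : θ = 0 by simpa [hθ] using hLθ
  by_contra hθ0
  have : L j < L j := calc
    L j = g L j := (congrFun hL j).symm
    _ ≤ g (θ • s) j := hmono hLθ j
    _ ≤ θ * g s j := hg θ hθ1 s j
    _ < θ * s j := ENNReal.mul_lt_mul_right hθ0 (ne_top_of_le_ne_top one_ne_top hθ1) (hlt j)
    _ = L j := hj.symm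
  exact this.false

lemma exists_eq_top_of_isFixedPt_of_le [Fintype ι] [Nonempty ι] (hg : MapSmulLeSmul g)
    (hmono : Monotone g) {μ s : ι → ℝ≥0∞} (hμ : IsFixedPt g μ) (hsμ : s ≤ μ)
    (hlt : ∀ j, s j < g s j) : ∃ j, μ j = ⊤ := by
  by_contra! hμt
  have hgsμ : g s ≤ μ := hμ.eq ▸ hmono hsμ
  obtain ⟨θ, hθ1, j, hsθ, hj⟩ :=
    exists_le_smul_of_le hsμ (fun j => (pos_of_gt ((hlt j).trans_le (hgsμ j))).ne') hμt
  have : g s j < g s j := calc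
    g s j ≤ g (θ • μ) j := hmono hsθ j
    _ ≤ θ * g μ j := hg θ hθ1 μ j
    _ = s j := by rw [hμ.eq, hj]
    _ < g s j := hlt j
  exact this.false

end MapSmulLeSmul

variable [Fintype ι] {g : (ι → ℝ≥0∞) → ι → ℝ≥0∞}

theorem tendsto_iterate_nhds_zero_of_iterate_lt (hmono : Monotone g) (hcont : Continuous g)
    (hg : MapSmulLeSmul g) {N : ℕ}
    (hstrict : ∀ x y, x < y → ∀ k, g^[N] x k ≠ ⊤ → g^[N] x k < g^[N] y k)
    (htop : ∀ x j, x j = ⊤ → g^[N] x = ⊤) {l : ι → ℝ≥0∞} (hl : ∀ j, l j ≠ ⊤) {m : ℕ}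
    (hm : 0 < m) (hlt : g^[m] l < l) : Tendsto (fun n => g^[n] l) atTop (𝓝 0) := by
  have hanti : Antitone fun q => (g^[m])^[q] l :=
    (hmono.iterate m).antitone_iterate_of_map_le hlt.le
  by_cases hfin : ∀ k, g^[N] l k ≠ ⊤
  · have hlim := tendsto_atTop_iInf hanti
    have hΛ : IsPeriodicPt g m (⨅ q, (g^[m])^[q] l) :=
      isFixedPt_of_tendsto_iterate hlim (hcont.iterate m).continuousAt
    have hNΛ : g^[N] (⨅ q, (g^[m])^[q] l) = 0 := by
      refine (hg.iterate hmono m).eq_zero_of_isFixedPt_of_le (hmono.iterate m) (hΛ.apply_iterate N)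
        (hmono.iterate N (iInf_le _ 0)) hfin fun k => ?_
      rw [(Function.Commute.iterate_iterate_self g m N).eq]
      exact hstrict _ _ hlt k (ne_top_of_le_ne_top (hfin k) (hmono.iterate N hlt.le k))
    refine tendsto_comp_iterate_of_tendsto_iterate_iterate hcont hm hlim continuous_id fun r => ?_
    obtain ⟨u, hu⟩ := hΛ.exists_iterate_eq hm r N
    rw [id, hu, hNΛ, (hg.iterate hmono u).map_zero]
  · push Not at hfin
    obtain ⟨k, hk⟩ := hfin
    have hT : g^[N + N] l = ⊤ := by rw [iterate_add_apply]; exact htop _ k hk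
    have hu : N + N ≤ m * (N + N) := Nat.le_mul_of_pos_left _ hm
    have hcollapse : ∀ j, g^[m * (N + N) - (N + N)] ⊤ j ≠ ⊤ := fun j => by
      rw [← hT, ← iterate_add_apply, Nat.sub_add_cancel hu, iterate_mul]
      exact ne_top_of_le_ne_top (hl j) (hanti (Nat.zero_le _) j)
    refine tendsto_const_nhds.congr' ?_
    filter_upwards [eventually_ge_atTop (m * (N + N) - (N + N))] with n hn
    exact (hg.iterate_eq_zero_of_le hmono hcollapse hn l).symm

theorem tendsto_sum_iterate_nhds_top_of_lt_iterate (hmono : Monotone g) (hcont : Continuous g)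
    (hg : MapSmulLeSmul g) {N : ℕ}
    (hstrict : ∀ x y, x < y → ∀ k, g^[N] x k ≠ ⊤ → g^[N] x k < g^[N] y k)
    (htop : ∀ x j, x j = ⊤ → g^[N] x = ⊤) {l : ι → ℝ≥0∞} {m : ℕ} (hm : 0 < m)
    (hlt : l < g^[m] l) : Tendsto (fun n => ∑ k, g^[n] l k) atTop (𝓝 ⊤) := by
  have hmon : Monotone fun q => (g^[m])^[q] l :=
    (hmono.iterate m).monotone_iterate_of_le_map hlt.le
  have hblow : ∀ u, ∑ k, g^[u] ⊤ k = ⊤ := by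
    intro u
    by_contra h
    have hfin : ∀ k, g^[u] ⊤ k ≠ ⊤ := fun k hk =>
      h (ENNReal.sum_eq_top.2 ⟨k, Finset.mem_univ k, hk⟩)
    have hzero : (g^[m])^[u + 1] l = 0 := by
      rw [← iterate_mul]
      exact hg.iterate_eq_zero_of_le hmono hfin (by nlinarith) l
    exact (hlt.trans_le ((hmon (Nat.le_add_left 1 u)).trans_eq hzero)).not_ge fun _ => zero_le
  by_cases hfin : ∀ k, g^[N] l k ≠ ⊤
  · have hlim := tendsto_atTop_iSup hmon
    have hΛ : IsPeriodicPt g m (⨆ q, (g^[m])^[q] l) :=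
      isFixedPt_of_tendsto_iterate hlim (hcont.iterate m).continuousAt
    obtain ⟨j, hj⟩ : ∃ j, g^[N] (⨆ q, (g^[m])^[q] l) j = ⊤ := by
      obtain ⟨-, j, -⟩ := Pi.lt_def.1 hlt
      have : Nonempty ι := ⟨j⟩
      refine (hg.iterate hmono m).exists_eq_top_of_isFixedPt_of_le (hmono.iterate m)
        (hΛ.apply_iterate N) (hmono.iterate N (le_iSup _ 0)) fun k => ?_
      rw [(Function.Commute.iterate_iterate_self g m N).eq]
      exact hstrict _ _ hlt k (hfin k)
    have hT : g^[N + N] (⨆ q, (g^[m])^[q] l) = ⊤ := by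
      rw [iterate_add_apply]; exact htop _ j hj
    refine tendsto_comp_iterate_of_tendsto_iterate_iterate hcont hm hlim
      (continuous_finsetSum _ fun k _ => continuous_apply k) fun r => ?_
    obtain ⟨u, hu⟩ := hΛ.exists_iterate_eq hm r (N + N)
    rw [hu, hT]
    exact hblow u
  · push Not at hfin
    obtain ⟨k, hk⟩ := hfin
    have hT : g^[N + N] l = ⊤ := by rw [iterate_add_apply]; exact htop _ k hk
    refine tendsto_const_nhds.congr' ?_
    filter_upwards [eventually_ge_atTop (N + N)] with n hn
    rw [← Nat.sub_add_cancel hn, iterate_add_apply, hT, hblow]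

end Dynamics

section GenFun

variable {d : ℕ} {Ω : Type*} [MeasurableSpace Ω] (P : Fin d → Measure Ω)
  (X : ℕ → Ω → Fin d → ℕ)

lemma measurable_prod_pow {n : ℕ} (hX : Measurable (X n)) (q : Fin d → ℝ≥0∞) :
    Measurable fun ω => ∏ j, q j ^ X n ω j :=
  Finset.measurable_prod _ fun j _ =>
    measurable_from_nat.comp ((measurable_pi_apply j).comp hX)

lemma one_le_genFun (hprob : ∀ k, IsProbabilityMeasure (P k)) {n : ℕ} {q : Fin d → ℝ≥0∞}
    (hq : ∀ j, 1 ≤ q j) (k : Fin d) : 1 ≤ genFun P X n q k :=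
  calc 1 = ∫⁻ _, 1 ∂P k := by simp
    _ ≤ genFun P X n q k :=
      lintegral_mono fun _ => Finset.one_le_prod' fun j _ => one_le_pow₀ (hq j)

lemma monotone_genFun (n : ℕ) : Monotone (genFun P X n) := fun _ _ h _ =>
  lintegral_mono fun _ => Finset.prod_le_prod' fun j _ => pow_le_pow_left' (h j) _

lemma monotone_logGenFun (n : ℕ) : Monotone (logGenFun P X n) := fun _ _ h k =>
  monotone_elog (monotone_genFun P X n (fun j => monotone_eexp (h j)) k)

lemma continuous_logGenFun (hcont : GenFunContinuous P X) : Continuous (logGenFun P X 1) :=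
  continuous_pi fun k => continuous_elog.comp <| (hcont k).comp_continuous
    (continuous_pi fun j => continuous_eexp.comp (continuous_apply j))
    fun x j => eexp_pos (x j)

lemma iterate_logGenFun (hprob : ∀ k, IsProbabilityMeasure (P k))
    (hiter : ∀ n q, (genFun P X 1)^[n] q = genFun P X n q) (n : ℕ) :
    (logGenFun P X 1)^[n] = logGenFun P X n := by
  induction n with
  | zero =>
    funext x k
    simp [logGenFun, ← hiter 0, elog_eexp]
  | succ n ih =>
    funext x k
    have hexp : (fun j => eexp (logGenFun P X n x j)) = genFun P X n (fun j => eexp (x j)) :=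
      funext fun j => eexp_elog (one_le_genFun P X hprob (fun i => one_le_eexp (x i)) j)
    have hstep : genFun P X 1 (genFun P X n fun j => eexp (x j))
        = genFun P X (n + 1) fun j => eexp (x j) := by
      rw [← hiter n, ← hiter (n + 1), iterate_succ_apply']
    rw [iterate_succ_apply', ih, logGenFun, hexp, hstep]
    rfl

lemma mapSmulLeSmul_logGenFun (hprob : ∀ k, IsProbabilityMeasure (P k)) {n : ℕ}
    (hX : Measurable (X n)) : MapSmulLeSmul (logGenFun P X n) := by
  intro θ hθ x k
  have hθt : θ ≠ ⊤ := ne_top_of_le_ne_top one_ne_top hθ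
  set Z : Ω → ℝ≥0∞ := fun ω => ∏ j, eexp (x j) ^ X n ω j
  have hZ : ∀ ω, ∏ j, eexp ((θ • x) j) ^ X n ω j = Z ω ^ θ.toReal := fun ω => by
    simp only [Z, Pi.smul_apply, smul_eq_mul, eexp_mul hθt, ← ENNReal.prod_rpow_of_nonneg
      ENNReal.toReal_nonneg, ← ENNReal.rpow_mul_natCast, ← ENNReal.rpow_natCast_mul, mul_comm]
  calc logGenFun P X n (θ • x) k = elog (∫⁻ ω, Z ω ^ θ.toReal ∂P k) := by
        simp only [logGenFun, genFun, hZ]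
    _ ≤ elog ((∫⁻ ω, Z ω ∂P k) ^ θ.toReal) := monotone_elog <|
        lintegral_rpow_le_rpow_lintegral (measurable_prod_pow X hX _).aemeasurable
          ENNReal.toReal_nonneg (ENNReal.toReal_le_of_le_ofReal zero_le_one (by simpa using hθ))
    _ = (θ • logGenFun P X n x) k := by
        rw [elog_rpow _ ENNReal.toReal_nonneg, ENNReal.ofReal_toReal hθt]; rfl

lemma logGenFun_lt_logGenFun (hprob : ∀ k, IsProbabilityMeasure (P k)) {n : ℕ}
    (hX : Measurable (X n)) (hpos : ∀ k j, 0 < P k {ω | 1 ≤ X n ω j})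
    {x y : Fin d → ℝ≥0∞} (hxy : x < y) (k : Fin d) (hfin : logGenFun P X n x k ≠ ⊤) :
    logGenFun P X n x k < logGenFun P X n y k := by
  obtain ⟨hle, j, hj⟩ := Pi.lt_def.1 hxy
  have hexp_le : ∀ i, eexp (x i) ≤ eexp (y i) := fun i => monotone_eexp (hle i)
  have hfin' : genFun P X n (fun i => eexp (x i)) k ≠ ⊤ := fun h => hfin (elog_eq_top_iff.2 h)
  refine elog_lt_elog (one_le_genFun P X hprob (fun i => one_le_eexp (x i)) k) ?_
  refine lintegral_strict_mono_of_ae_le_of_ae_lt_on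
    (measurable_prod_pow X hX _).aemeasurable hfin'
    (ae_of_all _ fun ω => Finset.prod_le_prod' fun i _ => pow_le_pow_left' (hexp_le i) _)
    (hpos k j).ne' ?_
  filter_upwards [ae_lt_top (measurable_prod_pow X hX _) hfin'] with ω hω hωj
  exact ENNReal.prod_pow_lt_prod_pow (fun i => (eexp_pos (x i)).ne') hexp_le
    (strictMono_eexp hj) (Nat.one_le_iff_ne_zero.1 hωj) hω.ne

lemma logGenFun_eq_top {n : ℕ} (hX : Measurable (X n)) (hpos : ∀ k j, 0 < P k {ω | 1 ≤ X n ω j})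
    {x : Fin d → ℝ≥0∞} {j : Fin d} (hxj : x j = ⊤) : logGenFun P X n x = ⊤ := by
  funext k
  refine elog_eq_top_iff.2 (lintegral_eq_top_of_measure_eq_top_ne_zero
    (measurable_prod_pow X hX _).aemeasurable (ne_of_gt ((hpos k j).trans_le (measure_mono ?_))))
  intro ω (hω : 1 ≤ X n ω j)
  refine top_unique (le_of_eq_of_le ?_ (Finset.single_le_prod'
    (fun i _ => one_le_pow₀ (one_le_eexp (x i))) (Finset.mem_univ j)))
  rw [hxj, eexp_eq_top_iff.2 rfl, ENNReal.top_pow (Nat.one_le_iff_ne_zero.1 hω)]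

end GenFun

theorem logGenFun_monotone_limits_general
    {d : ℕ} {Ω : Type*} [MeasurableSpace Ω]
    (P : Fin d → Measure Ω) (X : ℕ → Ω → Fin d → ℕ)
    (hprob : ∀ k, IsProbabilityMeasure (P k))
    (hmeas : ∀ n, Measurable (X n))
    (hiter : ∀ n q, (genFun P X 1)^[n] q = genFun P X n q)
    (hPR : PositiveRegular P X)
    (hcont : GenFunContinuous P X) :
    ∀ l : Fin d → ℝ≥0∞, (∀ j, l j ≠ ⊤) →
      ((∃ m, 0 < m ∧ (logGenFun P X 1)^[m] l < l) →
        Tendsto (fun n => (logGenFun P X 1)^[n] l) atTop (nhds 0)) ∧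
      ((∃ m, 0 < m ∧ l < (logGenFun P X 1)^[m] l) →
        Tendsto (fun n => ∑ k, (logGenFun P X 1)^[n] l k) atTop (nhds ⊤)) := by
  obtain ⟨N, hN⟩ := hPR
  have hmono := monotone_logGenFun P X 1
  have hg := mapSmulLeSmul_logGenFun P X hprob (hmeas 1)
  have hcont' := continuous_logGenFun P X hcont
  have hstrict : ∀ x y, x < y → ∀ k, (logGenFun P X 1)^[N] x k ≠ ⊤ →
      (logGenFun P X 1)^[N] x k < (logGenFun P X 1)^[N] y k := by
    rw [iterate_logGenFun P X hprob hiter]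
    exact fun x y hxy => logGenFun_lt_logGenFun P X hprob (hmeas N) hN hxy
  have htop : ∀ x j, x j = ⊤ → (logGenFun P X 1)^[N] x = ⊤ := by
    rw [iterate_logGenFun P X hprob hiter]
    exact fun x j => logGenFun_eq_top P X (hmeas N) hN
  intro l hl
  constructor
  · rintro ⟨m, hm, hlt⟩
    exact tendsto_iterate_nhds_zero_of_iterate_lt hmono hcont' hg hstrict htop hl hm hlt
  · rintro ⟨m, hm, hlt⟩
    exact tendsto_sum_iterate_nhds_top_of_lt_iterate hmono hcont' hg hstrict htop hm hlt

/-- Under the hypotheses of the main theorem, if `λ ∈ [0,∞)^d` and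
`g⁽ᵐ⁾(λ) < λ` for some `m ∈ ℕ` (componentwise `≤` with at least one strict coordinate),
then `g⁽ⁿ⁾(λ) → 0` as `n → ∞`; symmetrically if `g⁽ᵐ⁾(λ) > λ` for some `m`, then
`|g⁽ⁿ⁾(λ)| → ∞`. -/
theorem logGenFun_monotone_limits
    {d : ℕ} {Ω : Type*} [MeasurableSpace Ω]
    (P : Fin d → Measure Ω) (X : ℕ → Ω → Fin d → ℕ)
    (hprob : ∀ k, IsProbabilityMeasure (P k))
    (hmeas : ∀ n, Measurable (X n))
    (hiter : ∀ n q, (genFun P X 1)^[n] q = genFun P X n q)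
    (hsub : Subcritical P X)
    (hPR : PositiveRegular P X)
    (hNS : NonSingular P X)
    (hcont : GenFunContinuous P X) :
    ∀ l : Fin d → ℝ≥0∞, (∀ j, l j ≠ ⊤) →
      ((∃ m, 0 < m ∧ (logGenFun P X 1)^[m] l < l) →
        Tendsto (fun n => (logGenFun P X 1)^[n] l) atTop (nhds 0)) ∧
      ((∃ m, 0 < m ∧ l < (logGenFun P X 1)^[m] l) →
        Tendsto (fun n => ∑ k, (logGenFun P X 1)^[n] l k) atTop (nhds ⊤)) :=
  logGenFun_monotone_limits_general P X hprob hmeas hiter hPR hcont
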